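/- Let Σ = {a,ā,b,b̄,c,c̄} with involution swapping each letter with its barred version, let k ≥ 1, and L = c·{ā,b̄}*·a^k·ā^k. For any m ≥ 1, the m-bounded k-hairpin completion satisfies H_k(L,m,m) = ⋃_{v ∈ {ā,b̄}^{≤m−1}} c·v·a^k·ā^k·v̄·c̄. -/

import Mathlib

open Computability

/-- Reverse-complement of a word under the involution `bar`. -/
def wbar {S : Type} (bar : S → S) (w : List S) : List S := (w.map bar).reverse

/-- The set of `α`-prefixes of `w` of length at most `ℓ`. -/
def Pa {S : Type} (α w : List S) (ℓ : ℕ) : Language S :=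
  {v | v ++ α <+: w ∧ v.length ≤ ℓ}

/-- `α Σ* ᾱ` : words with prefix `α` and suffix `ᾱ`. -/
def Dom {S : Type} (bar : S → S) (α : List S) : Language S :=
  {z | ∃ β, z = α ++ β ++ wbar bar α}

/-- One-step parameterized hairpin completion with binding word `α`,
left bound `ℓ`, right bound `r`. -/
def HaP {S : Type} (bar : S → S) (α : List S) (ℓ r : ℕ) (L : Language S) : Language S :=
  {z | ∃ γ β, γ.length ≤ ℓ ∧ z = γ ++ α ++ β ++ wbar bar α ++ wbar bar γ ∧
      α ++ β ++ wbar bar α ++ wbar bar γ ∈ L} ⊔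
  {z | ∃ γ β, γ.length ≤ r ∧ z = γ ++ α ++ β ++ wbar bar α ++ wbar bar γ ∧
      γ ++ α ++ β ++ wbar bar α ∈ L}

/-- One-step parameterized hairpin completion `H_k(L,ℓ,r)`. -/
def HkP {S : Type} (bar : S → S) (k ℓ r : ℕ) (L : Language S) : Language S :=
  {z | ∃ α : List S, α.length = k ∧ z ∈ HaP bar α ℓ r L}

def HaIter {S : Type} (bar : S → S) (α : List S) (ℓ r : ℕ) (L : Language S) : ℕ → Language S
  | 0 => L
  | n + 1 => HaP bar α ℓ r (HaIter bar α ℓ r L n)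

/-- Iterated parameterized hairpin completion `H_α*(L,ℓ,r)`. -/
def HaStar {S : Type} (bar : S → S) (α : List S) (ℓ r : ℕ) (L : Language S) : Language S :=
  {z | ∃ n, z ∈ HaIter bar α ℓ r L n}

def HkIter {S : Type} (bar : S → S) (k ℓ r : ℕ) (L : Language S) : ℕ → Language S
  | 0 => L
  | n + 1 => HkP bar k ℓ r (HkIter bar k ℓ r L n)

/-- Iterated parameterized hairpin completion `H_k*(L,ℓ,r)`. -/
def HkStar {S : Type} (bar : S → S) (k ℓ r : ℕ) (L : Language S) : Language S :=
  {z | ∃ n, z ∈ HkIter bar k ℓ r L n}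

/-- Unbounded two-sided hairpin completion `H_k(L)`. -/
def HU {S : Type} (bar : S → S) (k : ℕ) (L : Language S) : Language S :=
  {z | ∃ γ α β, α.length = k ∧ z = γ ++ α ++ β ++ wbar bar α ++ wbar bar γ ∧
      (α ++ β ++ wbar bar α ++ wbar bar γ ∈ L ∨ γ ++ α ++ β ++ wbar bar α ∈ L)}

/-- Unbounded right-sided hairpin completion `RH_k(L)`. -/
def RHU {S : Type} (bar : S → S) (k : ℕ) (L : Language S) : Language S :=
  {z | ∃ γ α β, α.length = k ∧ z = γ ++ α ++ β ++ wbar bar α ++ wbar bar γ ∧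
      γ ++ α ++ β ++ wbar bar α ∈ L}

def HUIter {S : Type} (bar : S → S) (k : ℕ) (L : Language S) : ℕ → Language S
  | 0 => L
  | n + 1 => HU bar k (HUIter bar k L n)

/-- Iterated unbounded two-sided hairpin completion `H_k*(L)`. -/
def HUStar {S : Type} (bar : S → S) (k : ℕ) (L : Language S) : Language S :=
  {z | ∃ n, z ∈ HUIter bar k L n}

def RHUIter {S : Type} (bar : S → S) (k : ℕ) (L : Language S) : ℕ → Language S
  | 0 => L
  | n + 1 => RHU bar k (RHUIter bar k L n)

/-- Iterated unbounded right-sided hairpin completion `RH_k*(L)`. -/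
def RHUStar {S : Type} (bar : S → S) (k : ℕ) (L : Language S) : Language S :=
  {z | ∃ n, z ∈ RHUIter bar k L n}

/-- Image of a language under reverse-complement. -/
def barSet {S : Type} (bar : S → S) (A : Language S) : Language S := wbar bar '' A

/-- The alphabet `Σ = {a, ā, b, b̄, c, c̄}`. -/
inductive HpAb : Type
  | a | abar | b | bbar | c | cbar
deriving DecidableEq

/-- The involution pairing `a ↔ ā`, `b ↔ b̄`, `c ↔ c̄`. -/
def HpAb.inv : HpAb → HpAb
  | .a => .abar
  | .abar => .a
  | .b => .bbar
  | .bbar => .b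
  | .c => .cbar
  | .cbar => .c

/-- The language `L = c · {ā,b̄}* · a^k · ā^k`. -/
def LHp (k : ℕ) : Language HpAb :=
  {z | ∃ v : List HpAb, (∀ x ∈ v, x = HpAb.abar ∨ x = HpAb.bbar) ∧
    z = HpAb.c :: (v ++ List.replicate k HpAb.a ++ List.replicate k HpAb.abar)}

/-- `u^n`: the `n`-fold concatenation of the word `u`. -/
def wpow {S : Type} (u : List S) (n : ℕ) : List S := (List.replicate n u).flatten


/-!
Every word of `L` starts with `c` and contains no `c̄`, so no left completion lands in `L`
(its `ᾱ` would end in `c̄`). In a right completion `γ α β ᾱ ∈ L`, the suffix `ᾱ` of length `k`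
must be `ā^k`, so `α = a^k`; since `a` occurs in `c·{ā,b̄}*·a^k` only in the final block,
`β` is empty and `γ = c·v`, whose length bound `m` gives `|v| ≤ m - 1`.
-/

lemma HpAb.inv_involutive : Function.Involutive HpAb.inv := by
  intro x
  cases x <;> rfl

section wbar

variable {S : Type} (bar : S → S)

@[simp] lemma length_wbar (w : List S) : (wbar bar w).length = w.length := by
  simp [wbar]

@[simp] lemma wbar_cons (x : S) (w : List S) : wbar bar (x :: w) = wbar bar w ++ [bar x] := by
  simp [wbar]

@[simp] lemma wbar_replicate (n : ℕ) (x : S) :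
    wbar bar (List.replicate n x) = List.replicate n (bar x) := by
  simp [wbar]

lemma wbar_wbar {bar : S → S} (h : Function.Involutive bar) (w : List S) :
    wbar bar (wbar bar w) = w := by
  simp [wbar, Function.comp_def, h _]

end wbar

/-- Counting `x` forces `β` to avoid `x`, while a nonempty `β` would end in `x`. -/
lemma List.eq_nil_of_append_replicate_append_eq {S : Type} [DecidableEq S] {x : S} {k : ℕ}
    (hk : 0 < k) {p q β : List S} (hq : x ∉ q)
    (h : p ++ List.replicate k x ++ β = q ++ List.replicate k x) : β = [] := by
  have hcount := congrArg (List.count x) h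
  simp only [List.count_append, List.count_replicate_self, List.count_eq_zero.2 hq] at hcount
  have hxβ : x ∉ β := List.count_eq_zero.1 (by omega)
  by_contra hβ
  have hlast := congrArg List.getLast? h
  rw [List.getLast?_append_of_ne_nil _ hβ, List.getLast?_append,
    List.getLast?_replicate, if_neg (by omega)] at hlast
  exact hxβ (List.mem_of_getLast? (by simpa using hlast))

namespace LHp

variable {k : ℕ} {z : List HpAb}

lemma head?_eq_c (hz : z ∈ LHp k) : z.head? = some HpAb.c := by
  obtain ⟨v, -, rfl⟩ := hz
  rfl

lemma cbar_not_mem (hz : z ∈ LHp k) : HpAb.cbar ∉ z := by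
  obtain ⟨v, hv, rfl⟩ := hz
  intro h
  simp only [List.mem_cons, List.mem_append, List.mem_replicate] at h
  rcases h with h | (h | h) | h
  · cases h
  · rcases hv _ h with h | h <;> cases h
  · cases h.2
  · cases h.2

lemma left_hairpin_not_mem {α β γ : List HpAb} (hα : α ≠ []) :
    α ++ β ++ wbar HpAb.inv α ++ wbar HpAb.inv γ ∉ LHp k := by
  intro h
  obtain ⟨x, t, rfl⟩ := List.exists_cons_of_ne_nil hα
  obtain rfl : x = HpAb.c := by simpa using head?_eq_c h
  exact cbar_not_mem h (by simp [HpAb.inv])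

lemma eq_of_right_hairpin_mem (hk : 0 < k) {α β γ : List HpAb} (hα : α.length = k)
    (h : γ ++ α ++ β ++ wbar HpAb.inv α ∈ LHp k) :
    α = List.replicate k HpAb.a ∧ β = [] ∧
      ∃ v : List HpAb, (∀ x ∈ v, x = HpAb.abar ∨ x = HpAb.bbar) ∧ γ = HpAb.c :: v := by
  obtain ⟨v, hv, hw⟩ := h
  have hsplit : (γ ++ α ++ β) ++ wbar HpAb.inv α =
      (HpAb.c :: (v ++ List.replicate k HpAb.a)) ++ List.replicate k HpAb.abar := by
    simpa using hw
  obtain ⟨hprefix, hsuffix⟩ := List.append_inj' hsplit (by simp [hα])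
  obtain rfl : α = List.replicate k HpAb.a := by
    simpa [wbar_wbar HpAb.inv_involutive, HpAb.inv] using congrArg (wbar HpAb.inv) hsuffix
  have ha : HpAb.a ∉ HpAb.c :: v := by
    simp only [List.mem_cons, not_or]
    exact ⟨by decide, fun h => by rcases hv _ h with h | h <;> cases h⟩
  obtain rfl := List.eq_nil_of_append_replicate_append_eq hk ha (by simpa using hprefix)
  exact ⟨rfl, rfl, v, hv, List.append_cancel_right (by simpa using hprefix)⟩

end LHp

/-- `H_k(L,m,m) = ⋃_{v ∈ {ā,b̄}^{≤m−1}} c·v·a^k·ā^k·v̄·c̄`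
for `L = c·{ā,b̄}*·a^k·ā^k`. -/
theorem HkP_LHp_eq (k m : ℕ) (hk : 1 ≤ k) (hm : 1 ≤ m) :
    HkP HpAb.inv k m m (LHp k) =
      {z | ∃ v : List HpAb, (∀ x ∈ v, x = HpAb.abar ∨ x = HpAb.bbar) ∧
        v.length ≤ m - 1 ∧
        z = HpAb.c :: (v ++ List.replicate k HpAb.a ++ List.replicate k HpAb.abar
              ++ wbar HpAb.inv v ++ [HpAb.cbar])} := by
  ext z
  constructor
  · rintro ⟨α, hα, ⟨γ, β, -, rfl, hL⟩ | ⟨γ, β, hγ, rfl, hL⟩⟩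
    · exact absurd hL (LHp.left_hairpin_not_mem (List.ne_nil_of_length_pos (by omega)))
    · obtain ⟨rfl, rfl, v, hv, rfl⟩ := LHp.eq_of_right_hairpin_mem hk hα hL
      exact ⟨v, hv, by simp at hγ; omega, by simp [HpAb.inv]⟩
  · rintro ⟨v, hv, hlen, rfl⟩
    refine ⟨List.replicate k HpAb.a, by simp,
      Or.inr ⟨HpAb.c :: v, [], by simp; omega, by simp [HpAb.inv], v, hv, by simp [HpAb.inv]⟩⟩
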